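/- Let N and m be integers with N ≥ 3 and 0 ≤ m ≤ N − 2. For every real number φ with m·π/(2·(N − 1)) < φ < π/2, one has sin((2φ + m·π)/N)·cos(φ − (2φ + m·π)/N) − (1/N)·sin(2φ)·cos(φ) > 0. -/

import Mathlib

lemma abs_sin_nat_mul_le' (n : ℕ) (x : ℝ) : |Real.sin (n * x)| ≤ n * |Real.sin x| := by
  induction n with
  | zero => simp
  | succ k ih =>
    have : ((k : ℝ) + 1) * x = k * x + x := by ring
    push_cast
    rw [this, Real.sin_add]
    calc |Real.sin (k * x) * Real.cos x + Real.cos (k * x) * Real.sin x|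
        ≤ |Real.sin (k * x) * Real.cos x| + |Real.cos (k * x) * Real.sin x| := abs_add_le _ _
      _ ≤ |Real.sin (k * x)| + |Real.sin x| := by
          rw [abs_mul, abs_mul]
          gcongr
          · exact mul_le_of_le_one_right (abs_nonneg _) (Real.abs_cos_le_one x)
          · exact mul_le_of_le_one_left (abs_nonneg _) (Real.abs_cos_le_one _)
      _ ≤ k * |Real.sin x| + |Real.sin x| := by linarith
      _ = ((k : ℝ) + 1) * |Real.sin x| := by ring

theorem stmt_12 (N m : ℤ) (hN : 3 ≤ N) (hm0 : 0 ≤ m) (hm : m ≤ N - 2) :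
    ∀ φ : ℝ, (m : ℝ) * Real.pi / (2 * ((N : ℝ) - 1)) < φ → φ < Real.pi / 2 →
      Real.sin ((2 * φ + (m : ℝ) * Real.pi) / (N : ℝ))
          * Real.cos (φ - (2 * φ + (m : ℝ) * Real.pi) / (N : ℝ))
        - (1 / (N : ℝ)) * Real.sin (2 * φ) * Real.cos φ > 0 := by
  intro φ hlow hup
  have hπ := Real.pi_pos
  have hNR : (3 : ℝ) ≤ (N : ℝ) := by exact_mod_cast hN
  have hmR : (0 : ℝ) ≤ (m : ℝ) := by exact_mod_cast hm0
  have hmNR : (m : ℝ) ≤ (N : ℝ) - 2 := by exact_mod_cast hm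
  have hNpos : (0 : ℝ) < (N : ℝ) := by linarith
  set θ : ℝ := (2 * φ + (m : ℝ) * Real.pi) / (N : ℝ) with hθdef
  -- φ > 0
  have hφ0 : 0 < φ := by
    have h0 : 0 ≤ (m : ℝ) * Real.pi / (2 * ((N : ℝ) - 1)) :=
      div_nonneg (by positivity) (by linarith)
    linarith
  -- from lower bound: m*π < 2*(N-1)*φ
  have hkey : (m : ℝ) * Real.pi < 2 * ((N : ℝ) - 1) * φ := by
    have h2 : (0 : ℝ) < 2 * ((N : ℝ) - 1) := by linarith
    calc (m : ℝ) * Real.pi = (m : ℝ) * Real.pi / (2 * ((N : ℝ) - 1)) * (2 * ((N : ℝ) - 1)) := by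
          rw [div_mul_cancel₀ _ (ne_of_gt h2)]
      _ < φ * (2 * ((N : ℝ) - 1)) := by exact mul_lt_mul_of_pos_right hlow h2
      _ = 2 * ((N : ℝ) - 1) * φ := by ring
  have hNθ : (N : ℝ) * θ = 2 * φ + (m : ℝ) * Real.pi := by
    rw [hθdef]; field_simp
  have hθpos : 0 < θ := by
    have : 0 < 2 * φ + (m : ℝ) * Real.pi := by positivity
    rw [hθdef]; positivity
  have hθlt2φ : θ < 2 * φ := by
    have : (N : ℝ) * θ < (N : ℝ) * (2 * φ) := by rw [hNθ]; nlinarith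
    exact lt_of_mul_lt_mul_left this (le_of_lt hNpos)
  have hθltπ : θ < Real.pi := by
    have : (N : ℝ) * θ < (N : ℝ) * Real.pi := by rw [hNθ]; nlinarith
    exact lt_of_mul_lt_mul_left this (le_of_lt hNpos)
  have hsinθ : 0 < Real.sin θ := Real.sin_pos_of_pos_of_lt_pi hθpos hθltπ
  have hcosφ : 0 < Real.cos φ := Real.cos_pos_of_mem_Ioo ⟨by linarith, hup⟩
  -- cos (φ - θ) > cos φ
  have habs : |φ - θ| < φ := by
    rw [abs_lt]; constructor <;> linarith
  have hcosgt : Real.cos φ < Real.cos (φ - θ) := by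
    have := Real.cos_lt_cos_of_nonneg_of_le_pi (abs_nonneg (φ - θ)) (by linarith) habs
    rwa [Real.cos_abs] at this
  -- sin (2φ) ≤ N * sin θ
  have hNnat : ((N.toNat : ℕ) : ℝ) = (N : ℝ) := by
    exact_mod_cast Int.toNat_of_nonneg (by omega : (0:ℤ) ≤ N)
  have hsin2φ : Real.sin (2 * φ) ≤ (N : ℝ) * Real.sin θ := by
    have h1 : |Real.sin ((N : ℝ) * θ)| ≤ (N : ℝ) * |Real.sin θ| := by
      have := abs_sin_nat_mul_le' N.toNat θ
      push_cast at this
      rwa [hNnat] at this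
    have h2 : |Real.sin ((N : ℝ) * θ)| = |Real.sin (2 * φ)| := by
      rw [hNθ, Real.sin_add_int_mul_pi, abs_mul]
      have : |((-1 : ℝ)) ^ m| = 1 := by
        rcases Int.even_or_odd m with h | h
        · rw [h.neg_one_zpow]; simp
        · rw [Odd.neg_one_zpow h]; simp
      rw [this, one_mul]
    rw [h2, abs_of_pos hsinθ] at h1
    exact le_trans (le_abs_self _) h1
  -- combine
  have h3 : (1 / (N : ℝ)) * Real.sin (2 * φ) * Real.cos φ ≤ Real.sin θ * Real.cos φ := by
    rw [div_mul_eq_mul_div, one_mul, div_mul_eq_mul_div, div_le_iff₀ hNpos]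
    nlinarith
  have h4 : Real.sin θ * Real.cos φ < Real.sin θ * Real.cos (φ - θ) :=
    mul_lt_mul_of_pos_left hcosgt hsinθ
  linarith
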